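/- Let K be an infinite field and let A₁, A₂ be ℤ-graded associative K-algebras with classical gauge actions τ¹ and τ². A K-algebra homomorphism f : A₁ → A₂ is a graded homomorphism (f((A₁)_n) ⊆ (A₂)_n for all n ∈ ℤ) if and only if f ∘ τ¹(z) = τ²(z) ∘ f for every z ∈ K^×. -/

import Mathlib

/-- `τ` is the classical gauge automorphism of the `ℤ`-graded `K`-algebra `A` attached to
`z ∈ Kˣ`: the (unique) `K`-linear map acting on `A_n` as multiplication by `zⁿ`. -/
def IsClassicalGaugeMap {K A : Type} [Field K] [Ring A] [Algebra K A]
    (𝒜 : ℤ → Submodule K A) (z : Kˣ) (τ : A →ₗ[K] A) : Prop :=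
  ∀ (n : ℤ), ∀ x ∈ 𝒜 n, τ x = ((z ^ n : Kˣ) : K) • x

/-! A graded map visibly commutes with maps acting on each `A_n` by the scalar `zⁿ`. Conversely,
apply the hypothesis to the gauge maps built from the decompositions `A ≃ ⨁ A_n`: if `a ∈ (A₁)_n`,
each component `b_m` of `f a` satisfies `zᵐ b_m = zⁿ b_m` for every `z ∈ Kˣ`. For `m ≠ n` the
`(m - n)`-th roots of unity form a finite group while `Kˣ` is infinite, so some `z` has
`zᵐ ≠ zⁿ`, forcing `b_m = 0`. -/

open DirectSum

instance Units.infinite {G₀ : Type*} [GroupWithZero G₀] [Infinite G₀] : Infinite G₀ˣ :=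
  have : Infinite {x : G₀ // x ≠ 0} := (Set.finite_singleton (0 : G₀)).infinite_compl.to_subtype
  .of_injective _ (unitsEquivNeZero (G₀ := G₀)).symm.injective

theorem exists_zpow_ne_one {R : Type*} [CommRing R] [IsDomain R] [Infinite Rˣ] {k : ℤ}
    (hk : k ≠ 0) : ∃ z : Rˣ, z ^ k ≠ 1 := by
  by_contra! h
  have : NeZero k.natAbs := ⟨Int.natAbs_ne_zero.mpr hk⟩
  have hinj : Function.Injective fun z : Rˣ ↦
      (⟨z, (mem_rootsOfUnity _ _).mpr (pow_natAbs_eq_one.mpr (h z))⟩ : rootsOfUnity k.natAbs R) :=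
    fun _ _ hzw ↦ congrArg Subtype.val hzw
  have := Finite.of_injective _ hinj
  exact not_finite Rˣ

section Gauge

variable {R M : Type*} [CommSemiring R] [AddCommMonoid M] [Module R M]
  (𝒜 : ℤ → Submodule R M) [Decomposition 𝒜]

noncomputable def gaugeMap (z : Rˣ) : M →ₗ[R] M :=
  (decomposeLinearEquiv 𝒜).symm.toLinearMap ∘ₗ
    lmap (fun n ↦ ((z ^ n : Rˣ) : R) • LinearMap.id) ∘ₗ (decomposeLinearEquiv 𝒜).toLinearMap

theorem decompose_gaugeMap (z : Rˣ) (x : M) (n : ℤ) :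
    decompose 𝒜 (gaugeMap 𝒜 z x) n = ((z ^ n : Rˣ) : R) • decompose 𝒜 x n := by
  simp [gaugeMap, decomposeLinearEquiv_apply, decomposeLinearEquiv_symm_apply]

theorem gaugeMap_of_mem (z : Rˣ) {n : ℤ} {x : M} (hx : x ∈ 𝒜 n) :
    gaugeMap 𝒜 z x = ((z ^ n : Rˣ) : R) • x := by
  classical
  simp [gaugeMap, decomposeLinearEquiv_apply, decomposeLinearEquiv_symm_apply,
    decompose_of_mem 𝒜 hx]

theorem mem_of_decompose_eq_zero_of_ne {n : ℤ} {x : M} (hx : ∀ m ≠ n, decompose 𝒜 x m = 0) :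
    x ∈ 𝒜 n := by
  classical
  have : decompose 𝒜 x = of _ n (decompose 𝒜 x n) := by
    ext m
    obtain rfl | hmn := eq_or_ne m n
    · simp
    · rw [hx m hmn, of_eq_of_ne _ _ _ hmn]
  rw [← decompose_coe, (decompose 𝒜).injective.eq_iff] at this
  exact this ▸ SetLike.coe_mem _

theorem mem_of_forall_gaugeMap_eq_zpow_smul {K M : Type*} [Field K] [Infinite K]
    [AddCommGroup M] [Module K M] (𝒜 : ℤ → Submodule K M) [Decomposition 𝒜] {n : ℤ} {x : M}
    (hx : ∀ z : Kˣ, gaugeMap 𝒜 z x = ((z ^ n : Kˣ) : K) • x) : x ∈ 𝒜 n := by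
  refine mem_of_decompose_eq_zero_of_ne 𝒜 fun m hmn ↦ ?_
  by_contra hm
  obtain ⟨z, hz⟩ := exists_zpow_ne_one (R := K) (sub_ne_zero.mpr hmn)
  have hcomp := congrArg (fun y ↦ (decompose 𝒜 y m : M)) (hx z)
  simp only [decompose_gaugeMap, decompose_smul, Submodule.coe_smul] at hcomp
  have hzmn : z ^ m = z ^ n :=
    Units.val_injective (smul_left_injective K (by exact_mod_cast hm) hcomp)
  exact hz (by rw [zpow_sub, hzmn, mul_inv_cancel])

end Gauge

section ClassicalGauge

variable {K A₁ A₂ : Type} [Field K] [Ring A₁] [Algebra K A₁] [Ring A₂] [Algebra K A₂]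

theorem isClassicalGaugeMap_gaugeMap (𝒜 : ℤ → Submodule K A₁) [Decomposition 𝒜] (z : Kˣ) :
    IsClassicalGaugeMap 𝒜 z (gaugeMap 𝒜 z) :=
  fun _ _ ↦ gaugeMap_of_mem 𝒜 z

theorem IsClassicalGaugeMap.map_apply_eq_of_map_mem {𝒜₁ : ℤ → Submodule K A₁} [Decomposition 𝒜₁]
    {𝒜₂ : ℤ → Submodule K A₂} {z : Kˣ} {τ₁ : A₁ →ₗ[K] A₁} {τ₂ : A₂ →ₗ[K] A₂}
    (h₁ : IsClassicalGaugeMap 𝒜₁ z τ₁) (h₂ : IsClassicalGaugeMap 𝒜₂ z τ₂) {f : A₁ →ₗ[K] A₂}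
    (hf : ∀ n, ∀ a ∈ 𝒜₁ n, f a ∈ 𝒜₂ n) (x : A₁) : f (τ₁ x) = τ₂ (f x) := by
  induction x using Decomposition.inductionOn 𝒜₁ with
  | zero => simp
  | homogeneous a => rw [h₁ _ a a.2, map_smul, h₂ _ (f a) (hf _ a a.2)]
  | add x y hx hy => rw [map_add, map_add, map_add, map_add, hx, hy]

end ClassicalGauge

/-- Over an infinite field, a `K`-algebra homomorphism of `ℤ`-graded algebras is graded iff
it intertwines the classical gauge actions: `f ∘ τ¹(z) = τ²(z) ∘ f` for every `z ∈ Kˣ`. -/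
theorem graded_hom_iff_classical_gauge_hom_of_infinite
    (K A₁ A₂ : Type) [Field K] [Infinite K]
    [Ring A₁] [Algebra K A₁] [Ring A₂] [Algebra K A₂]
    (𝒜₁ : ℤ → Submodule K A₁) [GradedRing 𝒜₁]
    (𝒜₂ : ℤ → Submodule K A₂) [GradedRing 𝒜₂]
    (f : A₁ →ₐ[K] A₂) :
    (∀ n : ℤ, ∀ a ∈ 𝒜₁ n, f a ∈ 𝒜₂ n) ↔
    (∀ (z : Kˣ) (τ₁ : A₁ →ₗ[K] A₁) (τ₂ : A₂ →ₗ[K] A₂),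
      IsClassicalGaugeMap 𝒜₁ z τ₁ → IsClassicalGaugeMap 𝒜₂ z τ₂ →
      ∀ x : A₁, f (τ₁ x) = τ₂ (f x)) := by
  refine ⟨fun hf z τ₁ τ₂ h₁ h₂ ↦ h₁.map_apply_eq_of_map_mem h₂ (f := f.toLinearMap) hf,
    fun H n a ha ↦ mem_of_forall_gaugeMap_eq_zpow_smul 𝒜₂ fun z ↦ ?_⟩
  rw [← map_smul, ← gaugeMap_of_mem 𝒜₁ z ha]
  exact (H z _ _ (isClassicalGaugeMap_gaugeMap 𝒜₁ z) (isClassicalGaugeMap_gaugeMap 𝒜₂ z) a).symm
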